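/- arXiv:1511.01953 — 2 statements merged into one kernel-verified Lean document; each statement's English description precedes it below -/
import Mathlib

section
/- Suppose Δ_i = ∑_{j=i}^N λ₁_j − ∑_{j=i}^{N-1} λ₂_j − ρ_i + ϖ_i with all multipliers nonnegative. If λ₁_i > 0, λ₂_i = 0, ρ_i = 0, and ϖ_i = ϖ_{i+1} = 0, then Δ_i > Δ_{i+1}; consequently the water-filling power p_i = ∑_k ∑_j max(γ_k/Δ_i − 1/λ_{jk}, 0) (with γ_k > 0, λ_{jk} > 0) satisfies p_i ≤ p_{i+1}, with strict inequality whenever p_{i+1} > 0. -/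
/-!
Splitting off the `i`-th terms of the sums gives `Δ i - Δ (i + 1) = lam1 i + ρ (i + 1) > 0`.
Each water-filling term `max (γ / t - a) 0` is nonincreasing in `t > 0`, and strictly
decreasing wherever it is positive; a positive sum has a positive term, which gives strictness.
-/

open Finset

theorem Finset.sum_lt_sum_of_lt_of_pos {ι M : Type*} [AddCommMonoid M] [LinearOrder M]
    [IsOrderedCancelAddMonoid M] {s : Finset ι} {f g : ι → M}
    (hle : ∀ i ∈ s, f i ≤ g i) (hlt : ∀ i ∈ s, 0 < g i → f i < g i)
    (hg : 0 < ∑ i ∈ s, g i) : ∑ i ∈ s, f i < ∑ i ∈ s, g i := by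
  obtain ⟨i, hi, hgi⟩ := exists_lt_of_sum_lt (f := fun _ ↦ (0 : M)) (by simpa using hg)
  exact sum_lt_sum hle ⟨i, hi, hlt i hi hgi⟩

theorem sum_Icc_eq_add_sum_Icc_add_one {M : Type*} [AddCommMonoid M] (f : ℕ → M) {a b : ℕ}
    (hab : a ≤ b) : ∑ j ∈ Icc a b, f j = f a + ∑ j ∈ Icc (a + 1) b, f j := by
  rw [Icc_add_one_left_eq_Ioc, add_sum_Ioc_eq_sum_Icc hab]

theorem multiplier_succ_lt {N i : ℕ} (hi : i < N) {lam1 lam2 ρ ϖ : ℕ → ℝ}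
    (hρ : 0 ≤ ρ (i + 1)) (h1 : 0 < lam1 i) (h2 : lam2 i = 0) (h3 : ρ i = 0)
    (h4 : ϖ i = 0) (h5 : ϖ (i + 1) = 0) :
    (∑ j ∈ Icc (i + 1) N, lam1 j) - (∑ j ∈ Icc (i + 1) (N - 1), lam2 j) - ρ (i + 1) + ϖ (i + 1)
      < (∑ j ∈ Icc i N, lam1 j) - (∑ j ∈ Icc i (N - 1), lam2 j) - ρ i + ϖ i := by
  rw [sum_Icc_eq_add_sum_Icc_add_one lam1 hi.le,
    sum_Icc_eq_add_sum_Icc_add_one lam2 (Nat.le_sub_one_of_lt hi)]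
  linarith

theorem max_div_sub_le_of_le {c s t a : ℝ} (hc : 0 ≤ c) (hs : 0 < s) (hst : s ≤ t) :
    max (c / t - a) 0 ≤ max (c / s - a) 0 :=
  max_le_max (sub_le_sub_right (div_le_div_of_nonneg_left hc hs hst) a) le_rfl

theorem max_div_sub_lt_of_lt {c s t a : ℝ} (hc : 0 < c) (hs : 0 < s) (hst : s < t)
    (hpos : 0 < max (c / s - a) 0) : max (c / t - a) 0 < max (c / s - a) 0 := by
  have hpos' : 0 < c / s - a := by simpa using hpos
  have hdiv : c / t < c / s := div_lt_div_of_pos_left hc hs hst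
  rw [max_eq_left hpos'.le]
  exact max_lt (by linarith) hpos'

section WaterFilling

variable {ι : Type*} [Fintype ι] {κ : ι → Type*} [∀ k, Fintype (κ k)]

noncomputable def waterFilling (γ : ι → ℝ) (lamc : (k : ι) → κ k → ℝ) (t : ℝ) : ℝ :=
  ∑ k, ∑ j, max (γ k / t - 1 / lamc k j) 0

theorem waterFilling_antitoneOn {γ : ι → ℝ} (hγ : ∀ k, 0 ≤ γ k) (lamc : (k : ι) → κ k → ℝ) :
    AntitoneOn (waterFilling γ lamc) (Set.Ioi 0) := fun _ hs _ _ hst ↦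
  sum_le_sum fun k _ ↦ sum_le_sum fun _ _ ↦ max_div_sub_le_of_le (hγ k) hs hst

theorem waterFilling_lt_of_lt {γ : ι → ℝ} (hγ : ∀ k, 0 < γ k) {lamc : (k : ι) → κ k → ℝ}
    {s t : ℝ} (hs : 0 < s) (hst : s < t) (hpos : 0 < waterFilling γ lamc s) :
    waterFilling γ lamc t < waterFilling γ lamc s :=
  sum_lt_sum_of_lt_of_pos
    (fun k _ ↦ sum_le_sum fun _ _ ↦ max_div_sub_le_of_le (hγ k).le hs hst.le)
    (fun k _ ↦ sum_lt_sum_of_lt_of_pos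
      (fun _ _ ↦ max_div_sub_le_of_le (hγ k).le hs hst.le)
      (fun _ _ ↦ max_div_sub_lt_of_lt (hγ k) hs hst))
    hpos

end WaterFilling

theorem stmt_5_general (N K : ℕ) (m : Fin K → ℕ)
    (lam1 lam2 ρ ϖ : ℕ → ℝ) (Δ : ℕ → ℝ)
    (γ : Fin K → ℝ) (lamc : (k : Fin K) → Fin (m k) → ℝ)
    (hγ : ∀ k, 0 < γ k)
    (hρ : ∀ j, 0 ≤ ρ j)
    (hΔ : ∀ i, Δ i = (∑ j ∈ Finset.Icc i N, lam1 j) - (∑ j ∈ Finset.Icc i (N - 1), lam2 j)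
        - ρ i + ϖ i)
    (p : ℕ → ℝ)
    (hp : ∀ i, p i = ∑ k, ∑ j, max (γ k / Δ i - 1 / lamc k j) 0)
    (i : ℕ) (hi : i < N)
    (h1 : 0 < lam1 i) (h2 : lam2 i = 0) (h3 : ρ i = 0)
    (h4 : ϖ i = 0) (h5 : ϖ (i + 1) = 0)
    (hΔpos : 0 < Δ (i + 1)) :
    Δ (i + 1) < Δ i ∧ p i ≤ p (i + 1) ∧ (0 < p (i + 1) → p i < p (i + 1)) := by
  have hlt : Δ (i + 1) < Δ i := by
    rw [hΔ, hΔ]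
    exact multiplier_succ_lt hi (hρ (i + 1)) h1 h2 h3 h4 h5
  have hp' : ∀ i, p i = waterFilling γ lamc (Δ i) := hp
  rw [hp', hp']
  exact ⟨hlt, waterFilling_antitoneOn (fun k ↦ (hγ k).le) lamc hΔpos (hΔpos.trans hlt) hlt.le,
    waterFilling_lt_of_lt hγ hΔpos hlt⟩

theorem stmt_5 (N K : ℕ) (m : Fin K → ℕ)
    (lam1 lam2 ρ ϖ : ℕ → ℝ) (Δ : ℕ → ℝ)
    (γ : Fin K → ℝ) (lamc : (k : Fin K) → Fin (m k) → ℝ)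
    (hγ : ∀ k, 0 < γ k) (hlamc : ∀ k j, 0 < lamc k j)
    (hlam1 : ∀ j, 0 ≤ lam1 j) (hlam2 : ∀ j, 0 ≤ lam2 j)
    (hρ : ∀ j, 0 ≤ ρ j) (hϖ : ∀ j, 0 ≤ ϖ j)
    (hΔ : ∀ i, Δ i = (∑ j ∈ Finset.Icc i N, lam1 j) - (∑ j ∈ Finset.Icc i (N - 1), lam2 j)
        - ρ i + ϖ i)
    (p : ℕ → ℝ)
    (hp : ∀ i, p i = ∑ k, ∑ j, max (γ k / Δ i - 1 / lamc k j) 0)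
    (i : ℕ) (hi : i < N)
    (h1 : 0 < lam1 i) (h2 : lam2 i = 0) (h3 : ρ i = 0)
    (h4 : ϖ i = 0) (h5 : ϖ (i + 1) = 0)
    (hΔpos : 0 < Δ (i + 1)) :
    Δ (i + 1) < Δ i ∧ p i ≤ p (i + 1) ∧ (0 < p (i + 1) → p i < p (i + 1)) :=
  stmt_5_general N K m lam1 lam2 ρ ϖ Δ γ lamc hγ hρ hΔ p hp i hi h1 h2 h3 h4 h5 hΔpos
end

section
/- Let g(p) = log(1 + a p)/(p + ε) with a > 0, ε > 0, let p° be its unique maximizer on (0,∞), and suppose total available energy E_tol > 0 and time horizon t > 0. Then the constrained maximizer of τ · log(1 + a p) subject to τ(p + ε) ≤ E_tol, 0 < τ ≤ t, 0 < p ≤ p_peak is: p* = p° if p° < p_peak and E_tol < t(p° + ε); p* = p_peak if p° ≥ p_peak, or if p° < p_peak and E_tol > t(p_peak + ε); and p* = E_tol/t − ε otherwise; with τ* = min(t, E_tol/(p* + ε)). -/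
/-!
The efficiency `g p = log (1 + a p) / (p + ε)` is quasiconcave on `(0, ∞)`: its superlevel set
`{r ≤ g}` is the superlevel set `{0 ≤ log (1 + a p) - r (p + ε)}` of a concave function. Hence `g`
increases up to its maximiser `p°` and decreases after it. A feasible schedule `(τ, p)` obeys two
bounds: `τ log (1 + a p) ≤ t log (1 + a p)` (time) and `τ log (1 + a p) ≤ E_tol g p` (energy).
When the energy budget is binding, the best power maximises `g` on `(0, p_peak]`, namely
`min p° p_peak`; when time is binding, the best power is the largest one the energy allows over
the whole epoch, and the unimodality of `g` rules out larger powers.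
-/

open Real Set

theorem concaveOn_log_one_add_mul {a : ℝ} (ha : 0 ≤ a) :
    ConcaveOn ℝ (Ici 0) fun p => log (1 + a * p) := by
  refine ⟨convex_Ici 0, fun x hx y hy s t hs ht hst => ?_⟩
  have hx' : 1 + a * x ∈ Ioi (0 : ℝ) := by simp only [mem_Ioi]; nlinarith [mem_Ici.1 hx]
  have hy' : 1 + a * y ∈ Ioi (0 : ℝ) := by simp only [mem_Ioi]; nlinarith [mem_Ici.1 hy]
  have hcomb : s • (1 + a * x) + t • (1 + a * y) = 1 + a * (s • x + t • y) := by
    simp only [smul_eq_mul]; linear_combination hst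
  simpa only [hcomb] using strictConcaveOn_log_Ioi.concaveOn.2 hx' hy' hs ht hst

theorem quasiconcaveOn_div_add_const {s : Set ℝ} {f : ℝ → ℝ} {c : ℝ} (hf : ConcaveOn ℝ s f)
    (hc : ∀ x ∈ s, 0 < x + c) : QuasiconcaveOn ℝ s fun x => f x / (x + c) := by
  have hsuper : ∀ r, {x ∈ s | r ≤ f x / (x + c)} = {x ∈ s | r * (x + c) ≤ f x} := fun r => by
    ext x
    exact and_congr_right fun hx => le_div_iff₀ (hc x hx)
  intro r
  rw [hsuper]
  refine fun x ⟨hx, hrx⟩ y ⟨hy, hry⟩ a b ha hb hab => ⟨hf.1 hx hy ha hb hab, ?_⟩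
  calc r * (a • x + b • y + c) = a • (r * (x + c)) + b • (r * (y + c)) := by
        simp only [smul_eq_mul]; linear_combination (-(r * c)) * hab
    _ ≤ a • f x + b • f y := by gcongr
    _ ≤ f (a • x + b • y) := hf.2 hx hy ha hb hab

theorem QuasiconcaveOn.le_of_mem_segment {𝕜 E β : Type*} [Semiring 𝕜] [PartialOrder 𝕜]
    [AddCommMonoid E] [SMul 𝕜 E] [LinearOrder β] {s : Set E} {f : E → β}
    (hf : QuasiconcaveOn 𝕜 s f) {x y z : E} (hx : x ∈ s) (hy : y ∈ s) (hxy : f x ≤ f y)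
    (hz : z ∈ segment 𝕜 x y) : f x ≤ f z :=
  ((hf (f x)).segment_subset ⟨hx, le_rfl⟩ ⟨hy, hxy⟩ hz).2

noncomputable def energyEfficiency (a ε p : ℝ) : ℝ := log (1 + a * p) / (p + ε)

def IsFeasibleSchedule (ε E t pPeak τ p : ℝ) : Prop :=
  0 < p ∧ p ≤ pPeak ∧ 0 < τ ∧ τ ≤ t ∧ τ * (p + ε) ≤ E

def IsOptimalSchedule (a ε E t pPeak τ p : ℝ) : Prop :=
  IsFeasibleSchedule ε E t pPeak τ p ∧
    ∀ τ' p', IsFeasibleSchedule ε E t pPeak τ' p' → τ' * log (1 + a * p') ≤ τ * log (1 + a * p)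

section Schedule

variable {a ε E t pPeak : ℝ}

theorem energyEfficiency_le_of_mem_uIcc (ha : 0 ≤ a) (hε : 0 ≤ ε) {p₀ p q : ℝ} (hp₀ : 0 < p₀)
    (hmax : ∀ p, 0 < p → energyEfficiency a ε p ≤ energyEfficiency a ε p₀) (hp : 0 < p)
    (hq : q ∈ uIcc p p₀) : energyEfficiency a ε p ≤ energyEfficiency a ε q := by
  have hconcave : ConcaveOn ℝ (Ioi 0) fun p => log (1 + a * p) :=
    (concaveOn_log_one_add_mul ha).subset Ioi_subset_Ici_self (convex_Ioi 0)
  have hquasi := quasiconcaveOn_div_add_const hconcave fun x hx => add_pos_of_pos_of_nonneg hx hε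
  exact hquasi.le_of_mem_segment hp hp₀ (hmax p hp) (by rwa [segment_eq_uIcc])

theorem mul_log_le_mul_log (ha : 0 ≤ a) {τ p q : ℝ} (hτ : 0 ≤ τ) (hτt : τ ≤ t) (hp : 0 ≤ p)
    (hpq : p ≤ q) : τ * log (1 + a * p) ≤ t * log (1 + a * q) := by
  have hpos : 0 < 1 + a * p := by positivity
  exact mul_le_mul hτt (log_le_log hpos (by gcongr)) (log_nonneg (by nlinarith)) (hτ.trans hτt)

theorem mul_log_le_mul_energyEfficiency (ha : 0 ≤ a) {τ p : ℝ} (hp : 0 ≤ p) (hpε : 0 < p + ε)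
    (hτE : τ * (p + ε) ≤ E) : τ * log (1 + a * p) ≤ E * energyEfficiency a ε p :=
  calc τ * log (1 + a * p) = τ * (p + ε) * energyEfficiency a ε p := by
        rw [energyEfficiency]; field_simp
    _ ≤ E * energyEfficiency a ε p :=
        mul_le_mul_of_nonneg_right hτE (div_nonneg (log_nonneg (by nlinarith)) hpε.le)

theorem isFeasibleSchedule_min (hε : 0 ≤ ε) (hE : 0 < E) (ht : 0 < t) {q : ℝ} (hq : 0 < q)
    (hqpeak : q ≤ pPeak) : IsFeasibleSchedule ε E t pPeak (min t (E / (q + ε))) q := by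
  have hqε : 0 < q + ε := by positivity
  refine ⟨hq, hqpeak, lt_min ht (by positivity), min_le_left _ _, ?_⟩
  calc min t (E / (q + ε)) * (q + ε) ≤ E / (q + ε) * (q + ε) := by gcongr; exact min_le_right _ _
    _ = E := div_mul_cancel₀ E hqε.ne'

theorem isOptimalSchedule_of_energy_limited (ha : 0 ≤ a) (hε : 0 ≤ ε) (hE : 0 < E) (ht : 0 < t)
    {q : ℝ} (hq : 0 < q) (hqpeak : q ≤ pPeak) (hlim : E ≤ t * (q + ε))
    (hbest : ∀ p, 0 < p → p ≤ pPeak → energyEfficiency a ε p ≤ energyEfficiency a ε q) :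
    IsOptimalSchedule a ε E t pPeak (min t (E / (q + ε))) q := by
  have hqε : 0 < q + ε := by positivity
  refine ⟨isFeasibleSchedule_min hε hE ht hq hqpeak, fun τ p ⟨hp, hppeak, _, _, hτE⟩ => ?_⟩
  rw [min_eq_right ((div_le_iff₀ hqε).2 hlim)]
  calc τ * log (1 + a * p) ≤ E * energyEfficiency a ε p :=
        mul_log_le_mul_energyEfficiency ha hp.le (by positivity) hτE
    _ ≤ E * energyEfficiency a ε q := by gcongr; exact hbest p hp hppeak
    _ = E / (q + ε) * log (1 + a * q) := by rw [energyEfficiency]; ring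

theorem isOptimalSchedule_of_time_limited (ha : 0 ≤ a) (hε : 0 ≤ ε) (hE : 0 < E) (ht : 0 < t)
    {q : ℝ} (hq : 0 < q) (hqpeak : q ≤ pPeak) (hlim : t * (q + ε) ≤ E)
    (hbeyond : ∀ p, q < p → p ≤ pPeak → E * energyEfficiency a ε p ≤ t * log (1 + a * q)) :
    IsOptimalSchedule a ε E t pPeak (min t (E / (q + ε))) q := by
  have hqε : 0 < q + ε := by positivity
  refine ⟨isFeasibleSchedule_min hε hE ht hq hqpeak, fun τ p ⟨hp, hppeak, hτ, hτt, hτE⟩ => ?_⟩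
  rw [min_eq_left ((le_div_iff₀ hqε).2 hlim)]
  rcases le_or_gt p q with hpq | hqp
  · exact mul_log_le_mul_log ha hτ.le hτt hp.le hpq
  · exact (mul_log_le_mul_energyEfficiency ha hp.le (by positivity) hτE).trans
      (hbeyond p hqp hppeak)

theorem isOptimalSchedule_peak (ha : 0 ≤ a) (hε : 0 ≤ ε) (hE : 0 < E) (ht : 0 < t)
    (hpeak : 0 < pPeak) (hlim : t * (pPeak + ε) ≤ E) :
    IsOptimalSchedule a ε E t pPeak (min t (E / (pPeak + ε))) pPeak :=
  isOptimalSchedule_of_time_limited ha hε hE ht hpeak le_rfl hlim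
    fun _ hlt hle => absurd hle hlt.not_ge

theorem isOptimalSchedule_of_energy_eq (ha : 0 ≤ a) (hε : 0 ≤ ε) (hE : 0 < E) (ht : 0 < t)
    {q : ℝ} (hq : 0 < q) (hqpeak : q ≤ pPeak) (heq : t * (q + ε) = E)
    (hbeyond : ∀ p, q < p → p ≤ pPeak → energyEfficiency a ε p ≤ energyEfficiency a ε q) :
    IsOptimalSchedule a ε E t pPeak (min t (E / (q + ε))) q := by
  have hqε : 0 < q + ε := by positivity
  refine isOptimalSchedule_of_time_limited ha hε hE ht hq hqpeak heq.le fun p hqp hppeak => ?_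
  calc E * energyEfficiency a ε p ≤ E * energyEfficiency a ε q := by
        gcongr; exact hbeyond p hqp hppeak
    _ = t * log (1 + a * q) := by rw [energyEfficiency, ← heq]; field_simp

end Schedule

theorem stmt_8_general (a ε E_tol t p_peak p0 : ℝ)
    (ha : 0 < a) (hε : 0 < ε) (hE : 0 < E_tol) (ht : 0 < t) (hpeak : 0 < p_peak)
    (hp0 : 0 < p0)
    (hmax : ∀ p : ℝ, 0 < p →
        Real.log (1 + a * p) / (p + ε) ≤ Real.log (1 + a * p0) / (p0 + ε))
    (pstar : ℝ)
    (hpstar : pstar =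
        if p0 < p_peak then
          (if E_tol < t * (p0 + ε) then p0
           else if t * (p_peak + ε) < E_tol then p_peak
           else E_tol / t - ε)
        else p_peak)
    (τstar : ℝ) (hτstar : τstar = min t (E_tol / (pstar + ε))) :
    0 < pstar ∧ pstar ≤ p_peak ∧ 0 < τstar ∧ τstar ≤ t ∧
      τstar * (pstar + ε) ≤ E_tol ∧
      ∀ τ p : ℝ, 0 < τ → τ ≤ t → 0 < p → p ≤ p_peak → τ * (p + ε) ≤ E_tol →
        τ * Real.log (1 + a * p) ≤ τstar * Real.log (1 + a * pstar) := by
  obtain ⟨⟨hps, hpspeak, hτs, hτst, hτsE⟩, hopt⟩ :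
      IsOptimalSchedule a ε E_tol t p_peak τstar pstar := by
    have hunimodal : ∀ p q, 0 < p → q ∈ uIcc p p0 →
        energyEfficiency a ε p ≤ energyEfficiency a ε q :=
      fun p q hp hq => energyEfficiency_le_of_mem_uIcc ha.le hε.le hp0 hmax hp hq
    subst hτstar
    split_ifs at hpstar with h₁ h₂ h₃ <;> subst pstar
    · exact isOptimalSchedule_of_energy_limited ha.le hε.le hE ht hp0 h₁.le h₂.le
        fun p hp _ => hmax p hp
    · exact isOptimalSchedule_peak ha.le hε.le hE ht hpeak h₃.le
    · have hp0le : p0 ≤ E_tol / t - ε := by rw [le_sub_iff_add_le, le_div_iff₀' ht]; linarith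
      have hle : E_tol / t - ε ≤ p_peak := by rw [sub_le_iff_le_add, div_le_iff₀' ht]; linarith
      refine isOptimalSchedule_of_energy_eq ha.le hε.le hE ht (hp0.trans_le hp0le) hle
        (by rw [sub_add_cancel, mul_div_cancel₀ _ ht.ne']) fun p hlt _ =>
        hunimodal _ _ (hp0.trans_le (hp0le.trans hlt.le)) (mem_uIcc.2 (.inr ⟨hp0le, hlt.le⟩))
    · rcases le_total E_tol (t * (p_peak + ε)) with hlim | hlim
      · exact isOptimalSchedule_of_energy_limited ha.le hε.le hE ht hpeak le_rfl hlim
          fun p hp hle => hunimodal p p_peak hp (mem_uIcc.2 (.inl ⟨hle, not_lt.1 h₁⟩))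
      · exact isOptimalSchedule_peak ha.le hε.le hE ht hpeak hlim
  exact ⟨hps, hpspeak, hτs, hτst, hτsE,
    fun τ p hτ hτt hp hpp hτE => hopt τ p ⟨hp, hpp, hτ, hτt, hτE⟩⟩

theorem stmt_8 (a ε E_tol t p_peak p0 : ℝ)
    (ha : 0 < a) (hε : 0 < ε) (hE : 0 < E_tol) (ht : 0 < t) (hpeak : 0 < p_peak)
    (hp0 : 0 < p0)
    (hmax : ∀ p : ℝ, 0 < p →
        Real.log (1 + a * p) / (p + ε) ≤ Real.log (1 + a * p0) / (p0 + ε))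
    (huniq : ∀ p : ℝ, 0 < p →
        Real.log (1 + a * p) / (p + ε) = Real.log (1 + a * p0) / (p0 + ε) → p = p0)
    (pstar : ℝ)
    (hpstar : pstar =
        if p0 < p_peak then
          (if E_tol < t * (p0 + ε) then p0
           else if t * (p_peak + ε) < E_tol then p_peak
           else E_tol / t - ε)
        else p_peak)
    (τstar : ℝ) (hτstar : τstar = min t (E_tol / (pstar + ε))) :
    0 < pstar ∧ pstar ≤ p_peak ∧ 0 < τstar ∧ τstar ≤ t ∧
      τstar * (pstar + ε) ≤ E_tol ∧
      ∀ τ p : ℝ, 0 < τ → τ ≤ t → 0 < p → p ≤ p_peak → τ * (p + ε) ≤ E_tol →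
        τ * Real.log (1 + a * p) ≤ τstar * Real.log (1 + a * pstar) :=
  stmt_8_general a ε E_tol t p_peak p0 ha hε hE ht hpeak hp0 hmax pstar hpstar τstar hτstar
end
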